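/- For q ∈ kˣ, the generator x_{n+1} is a normal element of A_{q,n} (i.e. x_{n+1}·A = A·x_{n+1}), and the Ore localization A_{q,n}[x_{n+1}^{-1}] exists; its degree-zero component (A_{q,n}[x_{n+1}^{-1}])_0 is isomorphic as a k-algebra to the quantum polynomial algebra A_{q,n-1} on the n generators y_i = x_i x_{n+1}^{-1}, which satisfy y_i y_j = q y_j y_i for i < j. -/

import Mathlib

open OreLocalization

inductive QuantumRel (k : Type) [Field k] (q : k) (n : ℕ) :
    FreeAlgebra k (Fin (n + 1)) → FreeAlgebra k (Fin (n + 1)) → Prop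
  | rel (i j : Fin (n + 1)) (h : i < j) :
      QuantumRel k q n (FreeAlgebra.ι k i * FreeAlgebra.ι k j)
        (q • (FreeAlgebra.ι k j * FreeAlgebra.ι k i))

abbrev QuantumPoly (k : Type) [Field k] (q : k) (n : ℕ) : Type :=
  RingQuot (QuantumRel k q n)

noncomputable def QuantumPoly.X {k : Type} [Field k] {q : k} {n : ℕ} (i : Fin (n + 1)) :
    QuantumPoly k q n :=
  RingQuot.mkAlgHom k (QuantumRel k q n) (FreeAlgebra.ι k i)

namespace QP

variable {k : Type} [Field k] {q : k} {N : ℕ}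

open QuantumPoly Finsupp

lemma X_mul_X {i j : Fin (N + 1)} (h : i < j) :
    (X i * X j : QuantumPoly k q N) = q • (X j * X i) := by
  unfold QuantumPoly.X
  rw [← map_mul, ← map_mul, ← map_smul]
  exact RingQuot.mkAlgHom_rel k (QuantumRel.rel i j h)

lemma X_swap (hq : q ≠ 0) (i j : Fin (N + 1)) :
    ∃ u : kˣ, (X i * X j : QuantumPoly k q N) = (u : k) • (X j * X i) := by
  rcases lt_trichotomy i j with h | h | h
  · exact ⟨Units.mk0 q hq, X_mul_X h⟩
  · exact ⟨1, by simp [h]⟩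
  · refine ⟨(Units.mk0 q hq)⁻¹, ?_⟩
    have := X_mul_X (q := q) (k := k) h
    rw [this, smul_smul]
    simp [inv_mul_cancel₀ hq]

lemma prod_perm (hq : q ≠ 0) {l₁ l₂ : List (Fin (N + 1))} (h : l₁.Perm l₂) :
    ∃ u : kˣ, (l₁.map (X (q := q) (k := k))).prod = (u : k) • (l₂.map X).prod := by
  induction h with
  | nil => exact ⟨1, by simp⟩
  | cons a h ih =>
      obtain ⟨u, hu⟩ := ih
      exact ⟨u, by simp [hu, mul_smul_comm]⟩
  | swap a b l =>
      obtain ⟨u, hu⟩ := X_swap (q := q) (k := k) hq b a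
      refine ⟨u, ?_⟩
      simp only [List.map_cons, List.prod_cons, ← mul_assoc, hu, smul_mul_assoc]
  | trans h₁ h₂ ih₁ ih₂ =>
      obtain ⟨u₁, hu₁⟩ := ih₁
      obtain ⟨u₂, hu₂⟩ := ih₂
      exact ⟨u₁ * u₂, by rw [hu₁, hu₂, smul_smul]; norm_cast⟩

/-- normal monomial -/
noncomputable def nm (m : Fin (N + 1) →₀ ℕ) : QuantumPoly k q N :=
  ((Finsupp.toMultiset m).toList.map X).prod

lemma nm_zero : (nm 0 : QuantumPoly k q N) = 1 := by
  simp [nm]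

lemma nm_add (hq : q ≠ 0) (m₁ m₂ : Fin (N + 1) →₀ ℕ) :
    ∃ u : kˣ, (nm (m₁ + m₂) : QuantumPoly k q N) = (u : k) • (nm m₁ * nm m₂) := by
  have hperm : ((m₁ + m₂).toMultiset).toList.Perm
      ((m₁.toMultiset).toList ++ (m₂.toMultiset).toList) := by
    rw [← Multiset.coe_eq_coe, Multiset.coe_toList]
    simp [Finsupp.toMultiset_add, ← Multiset.coe_add]
  obtain ⟨u, hu⟩ := prod_perm (q := q) hq hperm
  exact ⟨u, by rw [nm, hu, List.map_append, List.prod_append]; rfl⟩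

lemma nm_single (hq : q ≠ 0) (i : Fin (N + 1)) (b : ℕ) :
    ∃ u : kˣ, (nm (Finsupp.single i b) : QuantumPoly k q N) = (u : k) • (X i) ^ b := by
  have hperm : ((Finsupp.single i b).toMultiset).toList.Perm (List.replicate b i) := by
    rw [← Multiset.coe_eq_coe, Multiset.coe_toList, Multiset.coe_replicate,
      Finsupp.toMultiset_single, Multiset.nsmul_singleton]
  obtain ⟨u, hu⟩ := prod_perm (q := q) hq hperm
  exact ⟨u, by rw [nm, hu, List.map_replicate, List.prod_replicate]⟩

end QP
namespace QP

variable {k : Type} [Field k] {q : k} {N : ℕ}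

open QuantumPoly Finsupp

lemma adjoin_range_X :
    Algebra.adjoin k (Set.range (X (q := q) (n := N))) = ⊤ := by
  have hsurj := RingQuot.mkAlgHom_surjective k (QuantumRel k q N)
  have h1 : Set.range (X (q := q) (n := N) (k := k)) =
      (RingQuot.mkAlgHom k (QuantumRel k q N)) '' Set.range (FreeAlgebra.ι k) := by
    rw [← Set.range_comp]; rfl
  rw [h1, ← AlgHom.map_adjoin, FreeAlgebra.adjoin_range_ι, Algebra.map_top,
    (AlgHom.range_eq_top _).mpr hsurj]

lemma span_nm (hq : q ≠ 0) :
    Submodule.span k (Set.range (nm (q := q) (N := N))) = ⊤ := by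
  set T := Submodule.span k (Set.range (nm (q := q) (N := N) (k := k))) with hT
  have h1 : (1 : QuantumPoly k q N) ∈ T := by
    rw [← nm_zero]; exact Submodule.subset_span (Set.mem_range_self _)
  have hmul : ∀ a b : QuantumPoly k q N, a ∈ T → b ∈ T → a * b ∈ T := by
    intro a b ha hb
    induction ha using Submodule.span_induction generalizing b with
    | mem a' ha' =>
        induction hb using Submodule.span_induction with
        | mem b' hb' =>
            obtain ⟨m₁, rfl⟩ := ha'
            obtain ⟨m₂, rfl⟩ := hb'
            obtain ⟨u, hu⟩ := nm_add (q := q) hq m₁ m₂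
            have : nm m₁ * nm m₂ = (u : k)⁻¹ • (nm (m₁ + m₂) : QuantumPoly k q N) := by
              rw [hu, smul_smul, inv_mul_cancel₀ (Units.ne_zero u), one_smul]
            rw [this]
            exact T.smul_mem _ (Submodule.subset_span (Set.mem_range_self _))
        | zero => simp
        | add x y _ _ hx hy => rw [mul_add]; exact T.add_mem hx hy
        | smul c x _ hx => rw [mul_smul_comm]; exact T.smul_mem _ hx
    | zero => simp
    | add x y _ _ hx hy => rw [add_mul]; exact T.add_mem (hx b hb) (hy _ hb)
    | smul c x _ hx => rw [smul_mul_assoc]; exact T.smul_mem _ (hx b hb)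
  let S : Subalgebra k (QuantumPoly k q N) := Submodule.toSubalgebra T h1 hmul
  have hX : ∀ i, X (q := q) i ∈ T := by
    intro i
    obtain ⟨u, hu⟩ := nm_single (q := q) (k := k) hq i 1
    have : X (q := q) i = (u : k)⁻¹ • nm (Finsupp.single i 1) := by
      rw [hu, smul_smul, inv_mul_cancel₀ (Units.ne_zero u), one_smul, pow_one]
    rw [this]
    exact T.smul_mem _ (Submodule.subset_span (Set.mem_range_self _))
  have htop : (⊤ : Subalgebra k (QuantumPoly k q N)) ≤ S := by
    rw [← adjoin_range_X (q := q)]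
    exact Algebra.adjoin_le (by rintro _ ⟨i, rfl⟩; exact hX i)
  refine le_antisymm le_top ?_
  intro a _
  exact htop (Algebra.mem_top) 

lemma quot_induction {P : QuantumPoly k q N → Prop}
    (halg : ∀ c : k, P (algebraMap k _ c)) (hgen : ∀ i, P (X i))
    (hmul : ∀ a b, P a → P b → P (a * b)) (hadd : ∀ a b, P a → P b → P (a + b)) :
    ∀ a, P a := by
  intro a
  obtain ⟨f, rfl⟩ := RingQuot.mkAlgHom_surjective k (QuantumRel k q N) a
  induction f using FreeAlgebra.induction with
  | grade0 c => rw [AlgHom.commutes]; exact halg c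
  | grade1 i => exact hgen i
  | mul a b ha hb => rw [map_mul]; exact hmul _ _ ha hb
  | add a b ha hb => rw [map_add]; exact hadd _ _ ha hb

lemma normal_left (hq : q ≠ 0) :
    ∀ a : QuantumPoly k q N, ∃ b, X (Fin.last N) * a = b * X (Fin.last N) := by
  apply quot_induction
  · intro c
    exact ⟨algebraMap k _ c, (Algebra.commutes c _).symm⟩
  · intro i
    rcases eq_or_lt_of_le (Fin.le_last i) with h | h
    · exact ⟨X (Fin.last N), by rw [h]⟩
    · refine ⟨q⁻¹ • X i, ?_⟩
      rw [smul_mul_assoc, X_mul_X h, smul_smul, inv_mul_cancel₀ hq, one_smul]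
  · rintro a b ⟨a', ha⟩ ⟨b', hb⟩
    exact ⟨a' * b', by rw [← mul_assoc, ha, mul_assoc, hb, ← mul_assoc]⟩
  · rintro a b ⟨a', ha⟩ ⟨b', hb⟩
    exact ⟨a' + b', by rw [mul_add, ha, hb, add_mul]⟩

lemma normal_right (hq : q ≠ 0) :
    ∀ a : QuantumPoly k q N, ∃ b, a * X (Fin.last N) = X (Fin.last N) * b := by
  apply quot_induction
  · intro c
    exact ⟨algebraMap k _ c, Algebra.commutes c _⟩
  · intro i
    rcases eq_or_lt_of_le (Fin.le_last i) with h | h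
    · exact ⟨X (Fin.last N), by rw [h]⟩
    · exact ⟨q • X i, by rw [X_mul_X h, mul_smul_comm]⟩
  · rintro a b ⟨a', ha⟩ ⟨b', hb⟩
    exact ⟨a' * b', by rw [mul_assoc, hb, ← mul_assoc, ha, mul_assoc]⟩
  · rintro a b ⟨a', ha⟩ ⟨b', hb⟩
    exact ⟨a' + b', by rw [add_mul, ha, hb, mul_add]⟩

lemma pow_normal (hq : q ≠ 0) (m : ℕ) :
    ∀ a : QuantumPoly k q N, ∃ b, (X (Fin.last N)) ^ m * a = b * (X (Fin.last N)) ^ m := by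
  induction m with
  | zero => intro a; exact ⟨a, by simp⟩
  | succ m ih =>
      intro a
      obtain ⟨b, hb⟩ := normal_left (q := q) hq a
      obtain ⟨c, hc⟩ := ih b
      refine ⟨c, ?_⟩
      rw [pow_succ, mul_assoc, hb, ← mul_assoc, hc, mul_assoc, ← pow_succ]

end QP
namespace QP

variable {k : Type} [Field k] {q : k} {N : ℕ}

open QuantumPoly Finsupp

lemma generic_inj {D : Type} [AddCommGroup D] (hq : q ≠ 0)
    (ψ : QuantumPoly k q N →ₐ[k] Module.End k (D →₀ k)) (v : Fin (N + 1) → D)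
    (hψ : ∀ (i : Fin (N + 1)) (d : D), ∃ u : kˣ,
      ψ (X i) (single d 1) = (u : k) • single (d + v i) 1)
    (hv : Function.Injective fun m : Fin (N + 1) →₀ ℕ => m.sum fun j a => a • v j)
    (d₀ : D) : Function.Injective fun a : QuantumPoly k q N => ψ a (single d₀ 1) := by
  have hpow : ∀ (i : Fin (N + 1)) (b : ℕ) (d : D), ∃ u : kˣ,
      (ψ (X i) ^ b) (single d 1) = (u : k) • single (d + b • v i) 1 := by
    intro i b
    induction b with
    | zero => intro d; exact ⟨1, by simp⟩
    | succ b ih =>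
        intro d
        obtain ⟨u₁, hu₁⟩ := hψ i d
        obtain ⟨u₂, hu₂⟩ := ih (d + v i)
        refine ⟨u₁ * u₂, ?_⟩
        rw [pow_succ, Module.End.mul_apply, hu₁, map_smul, hu₂, smul_smul]
        have hpt : d + v i + b • v i = d + (b + 1) • v i := by
          rw [succ_nsmul]; abel
        rw [hpt]; norm_cast
  have hnm : ∀ m : Fin (N + 1) →₀ ℕ, ∃ u : kˣ,
      ψ (nm m) (single d₀ 1) = (u : k) • single (d₀ + m.sum fun j a => a • v j) 1 := by
    intro m
    induction m using Finsupp.induction with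
    | zero => exact ⟨1, by simp [nm_zero, map_one]⟩
    | single_add i b f hif hb ih =>
        obtain ⟨u₀, h₀⟩ := ih
        obtain ⟨u₁, h₁⟩ := nm_add (q := q) hq (Finsupp.single i b) f
        obtain ⟨u₂, h₂⟩ := nm_single (q := q) hq i b
        obtain ⟨u₃, h₃⟩ := hpow i b (d₀ + f.sum fun j a => a • v j)
        refine ⟨u₁ * u₂ * u₃ * u₀, ?_⟩
        have hsum : ((Finsupp.single i b + f).sum fun j a => a • v j)
            = b • v i + f.sum fun j a => a • v j := by
          rw [Finsupp.sum_add_index' (fun j => zero_nsmul (v j))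
            (fun j a₁ a₂ => add_nsmul (v j) a₁ a₂), Finsupp.sum_single_index (zero_nsmul (v i))]
        rw [hsum, h₁, h₂, smul_mul_assoc, map_smul, map_smul, map_mul, map_pow,
          LinearMap.smul_apply, LinearMap.smul_apply, Module.End.mul_apply, h₀, map_smul, h₃]
        have hpt : d₀ + f.sum (fun j a => a • v j) + b • v i
            = d₀ + (b • v i + f.sum fun j a => a • v j) := by abel
        rw [hpt, smul_smul, smul_smul, smul_smul]
        congr 1
        push_cast
        ring
  have key : ∀ c : QuantumPoly k q N, ψ c (single d₀ 1) = 0 → c = 0 := by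
    intro c hc
    have hctop : c ∈ Submodule.span k (Set.range (nm (q := q) (N := N))) := by
      rw [span_nm hq]; trivial
    rw [Finsupp.mem_span_range_iff_exists_finsupp] at hctop
    obtain ⟨l, hl⟩ := hctop
    choose u hu using hnm
    have happ : (0 : D →₀ k) = ∑ m ∈ l.support,
        (l m * (u m : k)) • single (d₀ + m.sum fun j a => a • v j) (1 : k) := by
      rw [← hc, ← hl, map_finsuppSum, Finsupp.sum, LinearMap.sum_apply]
      refine Finset.sum_congr rfl ?_
      intro m _
      rw [map_smul, LinearMap.smul_apply, hu m, smul_smul]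
    have hcoeff : ∀ m₀, l m₀ * (u m₀ : k) = 0 := by
      intro m₀
      by_cases hmem : m₀ ∈ l.support
      · have h2 := congrArg (fun z : D →₀ k => z (d₀ + m₀.sum fun j a => a • v j)) happ
        simp only [Finsupp.zero_apply, Finsupp.finset_sum_apply] at h2
        rw [Finset.sum_eq_single m₀] at h2
        · rw [Finsupp.smul_apply, Finsupp.single_eq_same, smul_eq_mul, mul_one] at h2
          exact h2.symm
        · intro m hm hne
          have hne2 : d₀ + (m.sum fun j a => a • v j) ≠ d₀ + (m₀.sum fun j a => a • v j) := by
            intro hEq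
            exact hne (hv (add_left_cancel hEq))
          rw [Finsupp.smul_apply, Finsupp.single_eq_of_ne' hne2, smul_zero]
        · intro h; exact absurd hmem h
      · rw [Finsupp.notMem_support_iff.mp hmem, zero_mul]
    have hl0 : l = 0 := by
      ext m₀
      exact (mul_eq_zero.mp (hcoeff m₀)).resolve_right (Units.ne_zero _)
    rw [← hl, hl0, Finsupp.sum_zero_index]
  intro a b hab
  have : ψ (a - b) (single d₀ 1) = 0 := by
    rw [map_sub, LinearMap.sub_apply, sub_eq_zero]
    exact hab
  have := key _ this
  rwa [sub_eq_zero] at this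

end QP
namespace QP

variable {k : Type} [Field k] {q : k} {N : ℕ}

open QuantumPoly Finsupp

noncomputable def qu (hq : q ≠ 0) : kˣ := Units.mk0 q hq

def sdeg (i : Fin (N + 1)) (d : Fin (N + 1) →₀ ℤ) : ℤ :=
  ∑ j : Fin (N + 1), if i < j then d j else 0

lemma sdeg_add_single (i j : Fin (N + 1)) (d : Fin (N + 1) →₀ ℤ) (c : ℤ) :
    sdeg i (d + Finsupp.single j c) = sdeg i d + if i < j then c else 0 := by
  unfold sdeg
  have h1 : ∀ j' : Fin (N + 1), (if i < j' then (d + Finsupp.single j c) j' else 0)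
      = (if i < j' then d j' else 0) + (if i < j' then Finsupp.single j c j' else 0) := by
    intro j'; split <;> simp [Finsupp.add_apply]
  simp_rw [h1]
  rw [Finset.sum_add_distrib]
  congr 1
  have h2 : ∀ j' : Fin (N + 1), (if i < j' then Finsupp.single j c j' else 0)
      = (if j = j' then (if i < j' then c else 0) else 0) := by
    intro j'
    by_cases hj : j = j'
    · subst hj; by_cases h : i < j <;> simp [Finsupp.single_apply, h]
    · by_cases h : i < j' <;> simp [Finsupp.single_apply, hj]
  simp_rw [h2]
  rw [Finset.sum_ite_eq]
  simp

noncomputable def E (hq : q ≠ 0) (i : Fin (N + 1)) :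
    Module.End k ((Fin (N + 1) →₀ ℤ) →₀ k) :=
  Finsupp.lsum k fun d => ((qu hq ^ sdeg i d : kˣ) : k) • Finsupp.lsingle (d + Finsupp.single i 1)

lemma E_single (hq : q ≠ 0) (i : Fin (N + 1)) (d : Fin (N + 1) →₀ ℤ) (c : k) :
    E (q := q) hq i (single d c)
      = ((qu hq ^ sdeg i d : kˣ) : k) • single (d + Finsupp.single i 1) c := by
  rw [E, Finsupp.lsum_single, LinearMap.smul_apply, Finsupp.lsingle_apply]

lemma E_rel (hq : q ≠ 0) {i j : Fin (N + 1)} (h : i < j) :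
    E (q := q) (N := N) hq i * E hq j = q • (E hq j * E hq i) := by
  apply Finsupp.lhom_ext
  intro d c
  rw [Module.End.mul_apply, LinearMap.smul_apply, Module.End.mul_apply, E_single, map_smul,
    E_single, E_single, map_smul, E_single, smul_smul, smul_smul, smul_smul]
  have hp : d + Finsupp.single j 1 + Finsupp.single i 1
      = d + Finsupp.single i 1 + Finsupp.single j 1 := by abel
  rw [hp]
  congr 1
  rw [sdeg_add_single, sdeg_add_single, if_pos h, if_neg (by omega : ¬ j < i)]
  rw [add_zero]
  have hgoal : ((qu hq ^ sdeg j d) * (qu hq ^ (sdeg i d + 1)) : kˣ)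
      = qu hq * qu hq ^ sdeg i d * qu hq ^ sdeg j d := by group
  calc ((qu hq ^ sdeg j d : kˣ) : k) * ((qu hq ^ (sdeg i d + 1) : kˣ) : k)
      = (((qu hq ^ sdeg j d) * (qu hq ^ (sdeg i d + 1)) : kˣ) : k) := by rw [Units.val_mul]
    _ = ((qu hq * qu hq ^ sdeg i d * qu hq ^ sdeg j d : kˣ) : k) := by rw [hgoal]
    _ = q * ((qu hq ^ sdeg i d : kˣ) : k) * ((qu hq ^ sdeg j d : kˣ) : k) := by
          rw [Units.val_mul, Units.val_mul]; rfl

noncomputable def rep (hq : q ≠ 0) :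
    QuantumPoly k q N →ₐ[k] Module.End k ((Fin (N + 1) →₀ ℤ) →₀ k) :=
  RingQuot.liftAlgHom k ⟨FreeAlgebra.lift k (E hq), by
    rintro _ _ ⟨i, j, h⟩
    simp only [map_mul, map_smul, FreeAlgebra.lift_ι_apply]
    exact E_rel hq h⟩

lemma rep_X (hq : q ≠ 0) (i : Fin (N + 1)) : rep (N := N) hq (X i) = E hq i := by
  rw [QuantumPoly.X, rep, RingQuot.liftAlgHom_mkAlgHom_apply, FreeAlgebra.lift_ι_apply]

lemma sum_single_int_apply (m : Fin (N + 1) →₀ ℕ) (j' : Fin (N + 1)) :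
    (m.sum fun j a => a • Finsupp.single j (1 : ℤ)) j' = (m j' : ℤ) := by
  have h : ∀ j : Fin (N + 1), (m j • Finsupp.single j (1 : ℤ)) j'
      = if j = j' then (m j : ℤ) else 0 := by
    intro j
    rw [Finsupp.smul_apply, Finsupp.single_apply]
    split <;> simp
  rw [Finsupp.sum_apply, Finsupp.sum, Finset.sum_congr rfl (fun j _ => h j),
    Finset.sum_ite_eq' m.support j' (fun j => (m j : ℤ))]
  by_cases hmem : j' ∈ m.support
  · simp [hmem]
  · simp [hmem, Finsupp.notMem_support_iff.mp hmem]

lemma hv_std : Function.Injective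
    (fun m : Fin (N + 1) →₀ ℕ => m.sum fun j a => a • Finsupp.single j (1 : ℤ)) := by
  intro m₁ m₂ h
  ext j'
  have h1 := sum_single_int_apply m₁ j'
  have h2 := sum_single_int_apply m₂ j'
  have h3 : (m₁ j' : ℤ) = m₂ j' := by rw [← h1, ← h2]; exact congrFun (congrArg _ h) j'
  exact_mod_cast h3

end QP
namespace QP

variable {k : Type} [Field k] {q : k} {N : ℕ}

open QuantumPoly Finsupp

lemma sdeg_last (d : Fin (N + 1) →₀ ℤ) : sdeg (Fin.last N) d = 0 :=
  Finset.sum_eq_zero fun j _ => if_neg (not_lt.mpr (Fin.le_last j))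

lemma Elast_single (hq : q ≠ 0) (d : Fin (N + 1) →₀ ℤ) (c : k) :
    E (q := q) hq (Fin.last N) (single d c) = single (d + Finsupp.single (Fin.last N) 1) c := by
  rw [E_single, sdeg_last]
  simp

noncomputable def Einv : Module.End k ((Fin (N + 1) →₀ ℤ) →₀ k) :=
  Finsupp.lsum k fun d => Finsupp.lsingle (d - Finsupp.single (Fin.last N) (1 : ℤ))

lemma Einv_single (d : Fin (N + 1) →₀ ℤ) (c : k) :
    Einv (k := k) (N := N) (single d c) = single (d - Finsupp.single (Fin.last N) 1) c := by
  rw [Einv, Finsupp.lsum_single, Finsupp.lsingle_apply]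

lemma E_mul_Einv (hq : q ≠ 0) :
    E (q := q) hq (Fin.last N) * Einv = 1 := by
  apply Finsupp.lhom_ext
  intro d c
  rw [Module.End.mul_apply, Einv_single, Elast_single hq, Module.End.one_apply, sub_add_cancel]

lemma Einv_mul_E (hq : q ≠ 0) :
    Einv * E (q := q) hq (Fin.last N) = 1 := by
  apply Finsupp.lhom_ext
  intro d c
  rw [Module.End.mul_apply, Elast_single hq, Einv_single, Module.End.one_apply,
    add_sub_cancel_right]

noncomputable def Eunit (hq : q ≠ 0) : (Module.End k ((Fin (N + 1) →₀ ℤ) →₀ k))ˣ :=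
  ⟨E (q := q) hq (Fin.last N), Einv, E_mul_Einv hq, Einv_mul_E hq⟩

lemma rep_inj (hq : q ≠ 0) (d₀ : Fin (N + 1) →₀ ℤ) :
    Function.Injective fun a : QuantumPoly k q N => rep hq a (single d₀ 1) := by
  apply generic_inj hq (rep hq) (fun i => Finsupp.single i 1) ?_ hv_std d₀
  intro i d
  exact ⟨qu hq ^ sdeg i d, by rw [rep_X hq, E_single]⟩

lemma Elast_pow (hq : q ≠ 0) (mm : ℕ) (d : Fin (N + 1) →₀ ℤ) :
    (E (q := q) hq (Fin.last N) ^ mm) (single d 1)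
      = single (d + mm • Finsupp.single (Fin.last N) (1 : ℤ)) 1 := by
  induction mm with
  | zero => simp
  | succ mm ih =>
      rw [pow_succ', Module.End.mul_apply, ih, Elast_single hq]
      congr 1
      rw [succ_nsmul]
      abel

lemma reg_right (hq : q ≠ 0) (mm : ℕ) (r₁ r₂ : QuantumPoly k q N)
    (h : r₁ * (X (Fin.last N)) ^ mm = r₂ * (X (Fin.last N)) ^ mm) : r₁ = r₂ := by
  apply rep_inj hq (mm • Finsupp.single (Fin.last N) (1 : ℤ))
  have happ := congrArg (fun f : Module.End k ((Fin (N + 1) →₀ ℤ) →₀ k) =>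
    f (single 0 1)) (congrArg (rep (q := q) hq) h)
  simp only [map_mul, map_pow, rep_X hq, Module.End.mul_apply, Elast_pow hq, zero_add] at happ
  exact happ

noncomputable def oreSet (hq : q ≠ 0) :
    OreLocalization.OreSet (Submonoid.powers (X (Fin.last N) : QuantumPoly k q N)) := by
  have ore_cond : ∀ (r : QuantumPoly k q N)
      (s : Submonoid.powers (X (Fin.last N) : QuantumPoly k q N)),
      ∃ r', (s : QuantumPoly k q N) * r = r' * (s : QuantumPoly k q N) := by
    intro r s
    obtain ⟨mm, hmm⟩ := s.2
    obtain ⟨b, hb⟩ := pow_normal (q := q) hq mm r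
    exact ⟨b, by rw [← hmm]; exact hb⟩
  exact
  { ore_right_cancel := by
      intro r₁ r₂ s h
      obtain ⟨mm, hmm⟩ := s.2
      refine ⟨1, ?_⟩
      rw [← hmm] at h
      rw [reg_right hq mm r₁ r₂ h]
    oreNum := fun r s => Classical.choose (ore_cond r s)
    oreDenom := fun r s => s
    ore_eq := fun r s => Classical.choose_spec (ore_cond r s) }

end QP
namespace QP

variable {k : Type} [Field k] {q : k} {N : ℕ}

open QuantumPoly Finsupp OreLocalization

section Loc

variable [inst : OreLocalization.OreSet
  (Submonoid.powers (X (Fin.last N) : QuantumPoly k q N))]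

lemma smul_oreDiv_const (c : k) (a : QuantumPoly k q N)
    (s : Submonoid.powers (X (Fin.last N) : QuantumPoly k q N)) :
    c • (a /ₒ s) = (c • a) /ₒ s := by
  have huv : (s : QuantumPoly k q N) * (c • 1) = (c • 1) * (s : QuantumPoly k q N) := by
    rw [mul_smul_comm, smul_mul_assoc, mul_one, one_mul]
  rw [← smul_one_oreDiv_one_smul, oreDiv_smul_char (c • 1) a 1 s (c • (1 : QuantumPoly k q N))
    s huv, smul_eq_mul, smul_mul_assoc, one_mul, mul_one]

lemma x_mul_castSucc (hq : q ≠ 0) (i : Fin N) :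
    (X (Fin.last N) : QuantumPoly k q N) * X i.castSucc
      = (q⁻¹ • X i.castSucc) * X (Fin.last N) := by
  rw [smul_mul_assoc, X_mul_X (Fin.castSucc_lt_last i), smul_smul, inv_mul_cancel₀ hq, one_smul]

lemma y_mul (hq : q ≠ 0) (a b : Fin N) :
    ((X a.castSucc : QuantumPoly k q N) /ₒ (⟨X (Fin.last N), Submonoid.mem_powers _⟩ :
        Submonoid.powers (X (Fin.last N) : QuantumPoly k q N)))
      * (X b.castSucc /ₒ ⟨X (Fin.last N), Submonoid.mem_powers _⟩)
      = (q⁻¹ • (X a.castSucc * X b.castSucc)) /ₒ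
        (⟨X (Fin.last N), Submonoid.mem_powers _⟩ * ⟨X (Fin.last N), Submonoid.mem_powers _⟩) := by
  rw [oreDiv_mul_char (X a.castSucc) (X b.castSucc) _ _ (q⁻¹ • X a.castSucc)
    ⟨X (Fin.last N), Submonoid.mem_powers _⟩ (x_mul_castSucc hq a), smul_mul_assoc]

lemma y_rel (hq : q ≠ 0) {i j : Fin N} (hij : i < j) :
    ((X i.castSucc : QuantumPoly k q N) /ₒ (⟨X (Fin.last N), Submonoid.mem_powers _⟩ :
        Submonoid.powers (X (Fin.last N) : QuantumPoly k q N)))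
      * (X j.castSucc /ₒ ⟨X (Fin.last N), Submonoid.mem_powers _⟩)
      = q • ((X j.castSucc /ₒ ⟨X (Fin.last N), Submonoid.mem_powers _⟩)
        * (X i.castSucc /ₒ ⟨X (Fin.last N), Submonoid.mem_powers _⟩)) := by
  have hcs : i.castSucc < j.castSucc := by simpa using hij
  rw [y_mul hq i j, y_mul hq j i, smul_oreDiv_const, smul_smul,
    mul_inv_cancel₀ hq, one_smul, X_mul_X hcs, smul_smul, inv_mul_cancel₀ hq, one_smul]

end Loc

end QP
namespace QP

variable {k : Type} [Field k] {q : k} {N : ℕ}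

open QuantumPoly Finsupp OreLocalization

section Loc2

variable [inst : OreLocalization.OreSet
  (Submonoid.powers (X (Fin.last N) : QuantumPoly k q N))]

lemma isUnit_rep_pow (hq : q ≠ 0)
    (s : Submonoid.powers (X (Fin.last N) : QuantumPoly k q N)) :
    IsUnit (rep (q := q) hq (s : QuantumPoly k q N)) := by
  obtain ⟨mm, hmm⟩ := s.2
  rw [← hmm, map_pow, rep_X]
  exact (Eunit (q := q) hq).isUnit.pow mm

noncomputable def fS (hq : q ≠ 0) : Submonoid.powers (X (Fin.last N) : QuantumPoly k q N) →*
    (Module.End k ((Fin (N + 1) →₀ ℤ) →₀ k))ˣ where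
  toFun s := (isUnit_rep_pow hq s).unit
  map_one' := Units.ext (by simp)
  map_mul' a b := Units.ext (by simp [map_mul])

lemma fS_val (hq : q ≠ 0) (s : Submonoid.powers (X (Fin.last N) : QuantumPoly k q N)) :
    ((fS (q := q) hq s : (Module.End k ((Fin (N + 1) →₀ ℤ) →₀ k))ˣ) :
      Module.End k ((Fin (N + 1) →₀ ℤ) →₀ k)) = rep hq (s : QuantumPoly k q N) :=
  IsUnit.unit_spec _

lemma fS_xs (hq : q ≠ 0) :
    fS (q := q) (N := N) hq ⟨X (Fin.last N), Submonoid.mem_powers _⟩ = Eunit hq :=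
  Units.ext (by rw [fS_val, rep_X]; rfl)

noncomputable def locRep (hq : q ≠ 0) :
    OreLocalization (Submonoid.powers (X (Fin.last N) : QuantumPoly k q N))
      (QuantumPoly k q N) →+* Module.End k ((Fin (N + 1) →₀ ℤ) →₀ k) :=
  OreLocalization.universalHom (rep (q := q) hq).toRingHom (fS hq)
    (fun s => (IsUnit.unit_spec _).symm)

lemma locRep_div (hq : q ≠ 0) (a : QuantumPoly k q N)
    (s : Submonoid.powers (X (Fin.last N) : QuantumPoly k q N)) :
    locRep hq (a /ₒ s) = (((fS (q := q) hq s)⁻¹ :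
      (Module.End k ((Fin (N + 1) →₀ ℤ) →₀ k))ˣ) :
      Module.End k ((Fin (N + 1) →₀ ℤ) →₀ k)) * rep hq a :=
  OreLocalization.universalHom_apply _ _ _

variable (M : ℕ) (hMN : M + 1 = N)

/-- embedding of the small index set -/
def emb (i : Fin (M + 1)) : Fin (N + 1) := Fin.castSucc (Fin.cast hMN i)

lemma emb_ne_last (i : Fin (M + 1)) : Fin.last N ≠ emb M hMN i :=
  (Fin.castSucc_lt_last _).ne'

lemma emb_inj : Function.Injective (emb M hMN) := fun i j h =>
  (Fin.cast_injective hMN) (Fin.castSucc_injective _ h)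

noncomputable def phi (hq : q ≠ 0) : QuantumPoly k q M →ₐ[k]
    OreLocalization (Submonoid.powers (X (Fin.last N) : QuantumPoly k q N))
      (QuantumPoly k q N) :=
  RingQuot.liftAlgHom k ⟨FreeAlgebra.lift k (fun i : Fin (M + 1) =>
      (X (emb M hMN i) : QuantumPoly k q N) /ₒ ⟨X (Fin.last N), Submonoid.mem_powers _⟩), by
    rintro _ _ ⟨i, j, h⟩
    simp only [map_mul, map_smul, FreeAlgebra.lift_ι_apply]
    exact y_rel hq (show Fin.cast hMN i < Fin.cast hMN j from h)⟩

lemma phi_X (hq : q ≠ 0) (i : Fin (M + 1)) :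
    phi M hMN hq (X i) = (X (emb M hMN i) : QuantumPoly k q N) /ₒ
      ⟨X (Fin.last N), Submonoid.mem_powers _⟩ := by
  rw [phi]
  exact (RingQuot.liftAlgHom_mkAlgHom_apply k _ _ _).trans (by rw [FreeAlgebra.lift_ι_apply])

noncomputable def psi (hq : q ≠ 0) :
    QuantumPoly k q M →ₐ[k] Module.End k ((Fin (N + 1) →₀ ℤ) →₀ k) :=
  { toRingHom := (locRep (q := q) (N := N) hq).comp (phi M hMN hq).toRingHom
    commutes' := by
      intro c
      show locRep hq (phi M hMN hq (algebraMap k _ c)) = algebraMap k _ c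
      rw [AlgHom.commutes]
      have h1 : algebraMap k (OreLocalization
          (Submonoid.powers (X (Fin.last N) : QuantumPoly k q N)) (QuantumPoly k q N)) c
          = (algebraMap k (QuantumPoly k q N) c) /ₒ 1 := by
        rw [Algebra.algebraMap_eq_smul_one, OreLocalization.one_def, smul_oreDiv_const,
          ← Algebra.algebraMap_eq_smul_one]
      rw [h1, locRep_div, map_one, inv_one, Units.val_one, one_mul, AlgHom.commutes] }

lemma psi_apply (hq : q ≠ 0) (a : QuantumPoly k q M) :
    psi M hMN hq a = locRep (q := q) (N := N) hq (phi M hMN hq a) := rfl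

lemma psi_X (hq : q ≠ 0) (i : Fin (M + 1)) (d : Fin (N + 1) →₀ ℤ) :
    psi M hMN hq (X i) (single d 1) = ((qu hq ^ sdeg (emb M hMN i) d : kˣ) : k) •
      single (d + (Finsupp.single (emb M hMN i) 1 - Finsupp.single (Fin.last N) 1)) 1 := by
  rw [psi_apply, phi_X, locRep_div, fS_xs]
  have hval : (((Eunit (q := q) (N := N) hq)⁻¹ : (Module.End k ((Fin (N + 1) →₀ ℤ) →₀ k))ˣ) :
      Module.End k ((Fin (N + 1) →₀ ℤ) →₀ k)) = Einv := rfl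
  rw [hval, Module.End.mul_apply, rep_X, E_single, map_smul, Einv_single]
  congr 1
  rw [add_sub_assoc]

lemma sum_emb_apply (m : Fin (M + 1) →₀ ℕ) (j' : Fin (M + 1)) :
    ((m.sum fun j a => a • (Finsupp.single (emb M hMN j) (1 : ℤ)
      - Finsupp.single (Fin.last N) 1) : Fin (N + 1) →₀ ℤ)) (emb M hMN j') = (m j' : ℤ) := by
  have h : ∀ j : Fin (M + 1), ((m j • (Finsupp.single (emb M hMN j) (1 : ℤ)
      - Finsupp.single (Fin.last N) 1) : Fin (N + 1) →₀ ℤ)) (emb M hMN j')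
      = if j = j' then (m j : ℤ) else 0 := by
    intro j
    rw [Finsupp.smul_apply, Finsupp.sub_apply, Finsupp.single_apply, Finsupp.single_apply,
      if_neg (emb_ne_last M hMN j')]
    by_cases hjj : j = j'
    · subst hjj; simp
    · rw [if_neg (fun hc => hjj (emb_inj M hMN hc))]; simp [hjj]
  rw [Finsupp.sum_apply, Finsupp.sum, Finset.sum_congr rfl (fun j _ => h j),
    Finset.sum_ite_eq' m.support j' (fun j => (m j : ℤ))]
  by_cases hmem : j' ∈ m.support
  · simp [hmem]
  · simp [hmem, Finsupp.notMem_support_iff.mp hmem]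

lemma hv_emb : Function.Injective (fun m : Fin (M + 1) →₀ ℕ =>
    m.sum fun j a => a • (Finsupp.single (emb M hMN j) (1 : ℤ)
      - Finsupp.single (Fin.last N) 1)) := by
  intro m₁ m₂ h
  ext j'
  have h1 := sum_emb_apply M hMN m₁ j'
  have h2 := sum_emb_apply M hMN m₂ j'
  have h3 : (m₁ j' : ℤ) = m₂ j' := by
    rw [← h1, ← h2]; exact congrFun (congrArg _ h) (emb M hMN j')
  exact_mod_cast h3

lemma phi_inj (hq : q ≠ 0) : Function.Injective (phi (q := q) (N := N) M hMN hq) := by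
  intro a b hab
  apply generic_inj hq (psi M hMN hq)
    (fun i => Finsupp.single (emb M hMN i) (1 : ℤ) - Finsupp.single (Fin.last N) 1)
    (fun i d => ⟨qu hq ^ sdeg (emb M hMN i) d, psi_X M hMN hq i d⟩) (hv_emb M hMN) 0
  show psi M hMN hq a (single 0 1) = psi M hMN hq b (single 0 1)
  rw [psi_apply, psi_apply, hab]

lemma phi_range (hq : q ≠ 0) : (phi (q := q) (N := N) M hMN hq).range
    = Algebra.adjoin k (Set.range fun i : Fin (M + 1) =>
      (X (emb M hMN i) : QuantumPoly k q N) /ₒ ⟨X (Fin.last N), Submonoid.mem_powers _⟩) := by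
  rw [← Algebra.map_top, ← adjoin_range_X (q := q) (N := M), AlgHom.map_adjoin,
    ← Set.range_comp]
  have hfun : (⇑(phi M hMN hq) ∘ QuantumPoly.X) = fun i : Fin (M + 1) =>
      (X (emb M hMN i) : QuantumPoly k q N) /ₒ ⟨X (Fin.last N), Submonoid.mem_powers _⟩ :=
    funext fun i => phi_X M hMN hq i
  rw [hfun]

noncomputable def locIso (hq : q ≠ 0) :
    (Algebra.adjoin k (Set.range fun i : Fin (M + 1) =>
      (X (emb M hMN i) : QuantumPoly k q N) /ₒ
        (⟨X (Fin.last N), Submonoid.mem_powers _⟩ :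
          Submonoid.powers (X (Fin.last N) : QuantumPoly k q N)))) ≃ₐ[k] QuantumPoly k q M :=
  (Subalgebra.equivOfEq _ _ (phi_range M hMN hq).symm).trans
    (AlgEquiv.ofInjective (phi M hMN hq) (phi_inj M hMN hq)).symm

end Loc2

end QP

/-- `x_{n+1}` is normal in `A_{q,n}`, the Ore localization
`A_{q,n}[x_{n+1}^{-1}]` exists, and its degree-zero part (the subalgebra generated by the
elements `y_i = x_i x_{n+1}^{-1}`) satisfies the relations `y_i y_j = q y_j y_i` (`i < j`)
and is isomorphic to the quantum polynomial algebra `A_{q,n-1}` on `n` generators. -/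
theorem quantumPoly_localization_last (k : Type) [Field k] (q : k) (hq : q ≠ 0)
    (n : ℕ) (hn : 1 ≤ n) :
    let x : QuantumPoly k q n := QuantumPoly.X (Fin.last n)
    (∀ a : QuantumPoly k q n, ∃ b : QuantumPoly k q n, x * a = b * x) ∧
    (∀ a : QuantumPoly k q n, ∃ b : QuantumPoly k q n, a * x = x * b) ∧
    Nonempty (OreLocalization.OreSet (Submonoid.powers x)) ∧
    (∀ inst : OreLocalization.OreSet (Submonoid.powers x),
      let y : Fin n → OreLocalization (Submonoid.powers x) (QuantumPoly k q n) :=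
        fun i => QuantumPoly.X i.castSucc /ₒ ⟨x, Submonoid.mem_powers x⟩
      (∀ i j : Fin n, i < j → y i * y j = q • (y j * y i)) ∧
      Nonempty ((Algebra.adjoin k (Set.range y)) ≃ₐ[k] QuantumPoly k q (n - 1))) := by
  intro x
  refine ⟨QP.normal_left hq, QP.normal_right hq, ⟨QP.oreSet hq⟩, ?_⟩
  intro inst y
  refine ⟨fun i j hij => QP.y_rel (inst := inst) hq hij, ?_⟩
  have hMN : (n - 1) + 1 = n := by omega
  have hrange : Set.range y = Set.range (fun i : Fin (n - 1 + 1) =>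
      (QuantumPoly.X (QP.emb (n - 1) hMN i) : QuantumPoly k q n) /ₒ
        ⟨QuantumPoly.X (Fin.last n), Submonoid.mem_powers _⟩) := by
    have hcomp : (fun i : Fin (n - 1 + 1) =>
        (QuantumPoly.X (QP.emb (n - 1) hMN i) : QuantumPoly k q n) /ₒ
          ⟨QuantumPoly.X (Fin.last n), Submonoid.mem_powers _⟩) = y ∘ Fin.cast hMN := rfl
    rw [hcomp, Set.range_comp]
    have hsurj : Set.range (Fin.cast hMN) = Set.univ :=
      (finCongr hMN).surjective.range_eq
    rw [hsurj, Set.image_univ]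
  rw [hrange]
  exact ⟨QP.locIso (inst := inst) (n - 1) hMN hq⟩
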